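/- For n ≥ 0 and real 0 < q < 1 and x, y ≥ 0, one also has E_{n,q}(x+y) = Σ_{i=0}^{n} C(n,i) q^{(n-i) x} E_{n-i,q}(y) [x]_q^{i}. -/

import Mathlib

/-! Since `[m + x + y]_q = [x]_q + q^x [m + y]_q`, expanding the `n`-th power binomially inside the
series defining `E_{n,q}(x + y)` and exchanging the finite sum with the series (each resulting series
converges absolutely, as `|[z]_q| ≤ 1/(1 - q)` for `z ≥ 0`) gives the formula term by term. -/

open Finset

/-- q-analogue [z]_q = (1 - q^z)/(1 - q) (real rpow). -/
noncomputable def qn (q z : ℝ) : ℝ := (1 - q ^ z) / (1 - q)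

/-- q-Euler polynomial E_{n,q}(x) = [2]_q Σ_{m} (-1)^m q^m [m+x]_q^n. -/
noncomputable def qE (n : ℕ) (q x : ℝ) : ℝ :=
  (1 + q) * ∑' m : ℕ, (-1 : ℝ) ^ m * q ^ m * (qn q ((m : ℝ) + x)) ^ n

/-- Alternating q-power sum S*_{n,i,q}(a). -/
noncomputable def qS (n i a : ℕ) (q : ℝ) : ℝ :=
  ∑ j ∈ Finset.range a, (-1 : ℝ) ^ j * q ^ ((n + 1 - i) * j) * (qn q (j : ℝ)) ^ i

theorem qn_add {q : ℝ} (hq : 0 < q) (x z : ℝ) : qn q (x + z) = qn q x + q ^ x * qn q z := by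
  simp only [qn, Real.rpow_add hq]
  ring

theorem abs_qn_le {q z : ℝ} (hq0 : 0 < q) (hq1 : q < 1) (hz : 0 ≤ z) : |qn q z| ≤ (1 - q)⁻¹ := by
  have hqz_le : q ^ z ≤ 1 := Real.rpow_le_one hq0.le hq1.le hz
  have hqz_pos : 0 < q ^ z := Real.rpow_pos_of_pos hq0 z
  rw [qn, abs_div, abs_of_nonneg (by linarith), abs_of_pos (by linarith), div_eq_mul_inv]
  exact mul_le_of_le_one_left (by simp only [inv_nonneg]; linarith) (by linarith)

theorem summable_qE_terms {q y : ℝ} (hq0 : 0 < q) (hq1 : q < 1) (hy : 0 ≤ y) (k : ℕ) :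
    Summable fun m : ℕ => (-1 : ℝ) ^ m * q ^ m * qn q (m + y) ^ k := by
  refine Summable.of_norm_bounded
    ((summable_geometric_of_lt_one hq0.le hq1).mul_right ((1 - q)⁻¹ ^ k)) fun m => ?_
  rw [norm_mul, norm_mul, norm_pow, norm_neg, norm_one, one_pow, one_mul, norm_pow, norm_pow,
    Real.norm_of_nonneg hq0.le, Real.norm_eq_abs]
  gcongr
  exact abs_qn_le hq0 hq1 (by positivity)

theorem qEuler_addition'_general (q : ℝ) (hq0 : 0 < q) (hq1 : q < 1) (x y : ℝ)
    (hy : 0 ≤ y) (n : ℕ) :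
    qE n q (x + y) = ∑ i ∈ Finset.range (n + 1),
      (n.choose i : ℝ) * q ^ (x * ((n - i : ℕ) : ℝ)) * qE (n - i) q y * (qn q x) ^ i := by
  have binomial_expansion : ∀ m : ℕ, (-1 : ℝ) ^ m * q ^ m * qn q (m + (x + y)) ^ n =
      ∑ i ∈ range (n + 1), (n.choose i * qn q x ^ i * (q ^ x) ^ (n - i)) *
        ((-1) ^ m * q ^ m * qn q (m + y) ^ (n - i)) := fun m => by
    rw [add_left_comm, qn_add hq0, add_pow, mul_sum]
    exact sum_congr rfl fun i _ => by ring
  rw [qE, tsum_congr binomial_expansion,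
    Summable.tsum_finsetSum fun i _ => (summable_qE_terms hq0 hq1 hy (n - i)).mul_left _, mul_sum]
  refine sum_congr rfl fun i _ => ?_
  rw [tsum_mul_left, Real.rpow_mul_natCast hq0.le, qE]
  ring

theorem qEuler_addition' (q : ℝ) (hq0 : 0 < q) (hq1 : q < 1) (x y : ℝ) (hx : 0 ≤ x)
    (hy : 0 ≤ y) (n : ℕ) :
    qE n q (x + y) = ∑ i ∈ Finset.range (n + 1),
      (n.choose i : ℝ) * q ^ (x * ((n - i : ℕ) : ℝ)) * qE (n - i) q y * (qn q x) ^ i :=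
  qEuler_addition'_general q hq0 hq1 x y hy n
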